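/- In a finite zs-POSG, for any stage τ and any fixed player-1 continuation policy a¹_{τ:} = (a¹_τ, …, a¹_{ℓ−1}), define the best-response value v^{a¹}_τ(s_τ) = min over player-2 continuation policies a²_{τ:} of Σ_{x,o} s_τ(x, o) · α^{(a¹_{τ:}, a²_{τ:})}_τ(x, o). Then: (i) there exists a finite collection V of linear functions α : ℝ^{X × O¹_τ} → ℝ such that for every occupancy state s_τ with player-2 marginal s^m_τ and conditional occupancy states s^{c,o²}_τ, v^{a¹}_τ(s_τ) = Σ_{o² : s^m_τ(o²) > 0} s^m_τ(o²) · min_{α ∈ V} α(s^{c,o²}_τ); and (ii) this quantity lower-bounds the optimal value function: v^{a¹}_τ(s_τ) ≤ v*_τ(s_τ) for every occupancy state s_τ. -/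

import Mathlib

/-!
Fix player 1's continuation policy. After its own history `o²`, player 2 faces a one-player
problem whose state is the conditional occupancy state `s^{c,o²}`. Backward induction builds a
finite set of α-vectors, one per deterministic continuation strategy of player 2 (a control now
and one continuation vector per observation). Every player-2 policy has value at least
`Σ_{o²} s^m(o²) · min_α ⟨s^{c,o²}, α⟩`, since randomising never beats the best deterministic
choice, and the strategy following a minimising vector at every `o²` attains this bound. Hence
the best-response value is a minimum of finitely many linear functionals of the conditionals.

For the lower bound, player 2 may answer `a¹_τ` with any `a²` and then best-respond from
`T(s, a¹_τ, a²)`, so by induction on the number of remaining stages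
`v^{a¹}_τ(s) ≤ min_{a²} [R(s, a¹_τ, a²) + γ v*_{τ+1}(T(s, a¹_τ, a²))] ≤ v*_τ(s)`.
-/

open scoped BigOperators

section ZSPOSG

/-- A finitely supported probability distribution on a finite type,
represented as a nonnegative real-valued function summing to one. -/
def IsDist {α : Type} [Fintype α] (f : α → ℝ) : Prop :=
  (∀ a, 0 ≤ f a) ∧ ∑ a, f a = 1

/-- Stage-`τ` histories of player 1: sequences `(u¹_0, z¹_1, …, u¹_{τ-1}, z¹_τ)`. -/
abbrev Hist1 (U1 Z1 : Type) (τ : ℕ) : Type := Fin τ → U1 × Z1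

/-- Stage-`τ` histories of player 2. -/
abbrev Hist2 (U2 Z2 : Type) (τ : ℕ) : Type := Fin τ → U2 × Z2

/-- Stage-`τ` joint histories. -/
abbrev JHist (U1 Z1 U2 Z2 : Type) (τ : ℕ) : Type :=
  Hist1 U1 Z1 τ × Hist2 U2 Z2 τ

/-- Stage-`τ` stochastic decision rules of player 1. -/
abbrev DR1 (U1 Z1 : Type) [Fintype U1] (τ : ℕ) : Type :=
  {a : Hist1 U1 Z1 τ → U1 → ℝ // ∀ o, IsDist (a o)}

/-- Stage-`τ` stochastic decision rules of player 2. -/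
abbrev DR2 (U2 Z2 : Type) [Fintype U2] (τ : ℕ) : Type :=
  {a : Hist2 U2 Z2 τ → U2 → ℝ // ∀ o, IsDist (a o)}

variable {X U1 U2 Z1 Z2 : Type}
variable [Fintype X] [Fintype U1] [Fintype U2] [Fintype Z1] [Fintype Z2]

/-- Expected immediate reward `R(s_τ, a_τ)`. -/
noncomputable def Rstage (r : X → U1 × U2 → ℝ) (τ : ℕ)
    (s : X × JHist U1 Z1 U2 Z2 τ → ℝ) (a1 : DR1 U1 Z1 τ) (a2 : DR2 U2 Z2 τ) : ℝ :=
  ∑ xo : X × JHist U1 Z1 U2 Z2 τ, s xo *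
    ∑ u : U1 × U2, a1.1 xo.2.1 u.1 * a2.1 xo.2.2 u.2 * r xo.1 u

/-- Occupancy-state transition `T(s_τ, a_τ)`:
`T(s,a)(y,(o,u,z)) = a(u|o) ⬝ Σ_x s(x,o) p(y,z|x,u)`. -/
noncomputable def Tstage (p : X → U1 × U2 → X × (Z1 × Z2) → ℝ) (τ : ℕ)
    (s : X × JHist U1 Z1 U2 Z2 τ → ℝ) (a1 : DR1 U1 Z1 τ) (a2 : DR2 U2 Z2 τ) :
    X × JHist U1 Z1 U2 Z2 (τ + 1) → ℝ := fun yo =>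
  let o1 : Hist1 U1 Z1 τ := fun i => yo.2.1 i.castSucc
  let o2 : Hist2 U2 Z2 τ := fun i => yo.2.2 i.castSucc
  let u1 := (yo.2.1 (Fin.last τ)).1
  let z1 := (yo.2.1 (Fin.last τ)).2
  let u2 := (yo.2.2 (Fin.last τ)).1
  let z2 := (yo.2.2 (Fin.last τ)).2
  a1.1 o1 u1 * a2.1 o2 u2 * ∑ x : X, s (x, (o1, o2)) * p x (u1, u2) (yo.1, (z1, z2))

/-- Optimal value functions defined by backward induction: `vstar p r γ k τ s` is
`v*_τ(s)` when `k = ℓ - τ` stages remain; `vstar … 0 _ ≡ 0` and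
`v*_τ(s) = max_{a¹} min_{a²} [R(s,a) + γ v*_{τ+1}(T(s,a))]`. -/
noncomputable def vstar (p : X → U1 × U2 → X × (Z1 × Z2) → ℝ) (r : X → U1 × U2 → ℝ)
    (γ : ℝ) : (k : ℕ) → (τ : ℕ) → (X × JHist U1 Z1 U2 Z2 τ → ℝ) → ℝ
  | 0, _, _ => 0
  | k + 1, τ, s =>
      ⨆ a1 : DR1 U1 Z1 τ, ⨅ a2 : DR2 U2 Z2 τ,
        Rstage r τ s a1 a2 + γ * vstar p r γ k (τ + 1) (Tstage p τ s a1 a2)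

/-- Player-2 marginal occupancy state `s^{m,2}_τ(o²) = Σ_x Σ_{o¹} s(x,(o¹,o²))`. -/
noncomputable def marg2 (τ : ℕ) (s : X × JHist U1 Z1 U2 Z2 τ → ℝ)
    (o2 : Hist2 U2 Z2 τ) : ℝ :=
  ∑ x : X, ∑ o1 : Hist1 U1 Z1 τ, s (x, (o1, o2))

/-- Conditional occupancy state `s^{c,o²}_τ(x,o¹) = s(x,(o¹,o²)) / s^{m,2}_τ(o²)`. -/
noncomputable def condOcc (τ : ℕ) (s : X × JHist U1 Z1 U2 Z2 τ → ℝ)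
    (o2 : Hist2 U2 Z2 τ) : X × Hist1 U1 Z1 τ → ℝ :=
  fun xo1 => s (xo1.1, (xo1.2, o2)) / marg2 τ s o2

/-- Recomposition `c ⊙ m` of a conditional occupancy-state family `c` with a
player-2 marginal `m`: `(c ⊙ m)(x,(o¹,o²)) = c(o²)(x,o¹) ⬝ m(o²)`. -/
noncomputable def odot (τ : ℕ) (c : Hist2 U2 Z2 τ → X × Hist1 U1 Z1 τ → ℝ)
    (m : Hist2 U2 Z2 τ → ℝ) : X × JHist U1 Z1 U2 Z2 τ → ℝ :=
  fun xo => c xo.2.2 (xo.1, xo.2.1) * m xo.2.2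

/-- 1-norm distance between two real-valued functions on a finite type. -/
noncomputable def dist1 {α : Type} [Fintype α] (f g : α → ℝ) : ℝ :=
  ∑ a : α, |f a - g a|

/-- Full trajectories of length `τ`: the states `x_0,…,x_τ` together with the
per-player controls and observations `((u¹_t, z¹_{t+1}), (u²_t, z²_{t+1}))` for `t < τ`. -/
abbrev Traj (X U1 Z1 U2 Z2 : Type) (τ : ℕ) : Type :=
  (Fin (τ + 1) → X) × (Fin τ → (U1 × Z1) × (U2 × Z2))

/-- The stage-`t` joint history determined by the first `t` moves of a trajectory. -/
def histUpTo (τ : ℕ) (mv : Fin τ → (U1 × Z1) × (U2 × Z2)) (t : ℕ) (ht : t ≤ τ) :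
    JHist U1 Z1 U2 Z2 t :=
  (fun i => (mv (Fin.castLE ht i)).1, fun i => (mv (Fin.castLE ht i)).2)

/-- Probability of a trajectory under the process induced by `s0` and a joint
policy: `x_0 ∼ s0`, `u_t ∼ a_t(·|o_t)`, `(x_{t+1}, z_{t+1}) ∼ p(·|x_t, u_t)`. -/
noncomputable def trajProb (p : X → U1 × U2 → X × (Z1 × Z2) → ℝ) (s0 : X → ℝ)
    (pol1 : (t : ℕ) → DR1 U1 Z1 t) (pol2 : (t : ℕ) → DR2 U2 Z2 t)
    (τ : ℕ) (w : Traj X U1 Z1 U2 Z2 τ) : ℝ :=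
  s0 (w.1 0) * ∏ t : Fin τ,
    ((pol1 t.1).1 (histUpTo τ w.2 t.1 t.isLt.le).1 ((w.2 t).1.1) *
     (pol2 t.1).1 (histUpTo τ w.2 t.1 t.isLt.le).2 ((w.2 t).2.1) *
     p (w.1 t.castSucc) ((w.2 t).1.1, (w.2 t).2.1)
       (w.1 t.succ, ((w.2 t).1.2, (w.2 t).2.2)))

variable [DecidableEq X] [DecidableEq U1] [DecidableEq U2] [DecidableEq Z1] [DecidableEq Z2]

/-- The occupancy state induced by `(s0, a_0, …, a_{τ-1})`:
`s_τ(x,o) = Pr{x_τ = x, o_τ = o}`. -/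
noncomputable def occInduced (p : X → U1 × U2 → X × (Z1 × Z2) → ℝ) (s0 : X → ℝ)
    (pol1 : (t : ℕ) → DR1 U1 Z1 t) (pol2 : (t : ℕ) → DR2 U2 Z2 t)
    (τ : ℕ) : X × JHist U1 Z1 U2 Z2 τ → ℝ := fun xo =>
  ∑ w : Traj X U1 Z1 U2 Z2 τ,
    if w.1 (Fin.last τ) = xo.1 ∧ histUpTo τ w.2 τ le_rfl = xo.2
    then trajProb p s0 pol1 pol2 τ w else 0

/-- `α^{a_{τ:}}_τ(x,o)` defined by the backward recursion `α_ℓ ≡ 0` and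
`α_τ(x,o) = Σ_u a_τ(u|o) [r(x,u) + γ Σ_{y,z} p(y,z|x,u) α_{τ+1}(y,(o,u,z))]`;
`alphaRec … k τ` is `α_τ` when `k = ℓ - τ` stages remain. -/
noncomputable def alphaRec (p : X → U1 × U2 → X × (Z1 × Z2) → ℝ) (r : X → U1 × U2 → ℝ)
    (γ : ℝ) (pol1 : (t : ℕ) → DR1 U1 Z1 t) (pol2 : (t : ℕ) → DR2 U2 Z2 t) :
    (k : ℕ) → (τ : ℕ) → X → JHist U1 Z1 U2 Z2 τ → ℝ
  | 0, _, _, _ => 0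
  | k + 1, τ, x, o =>
      ∑ u : U1 × U2, (pol1 τ).1 o.1 u.1 * (pol2 τ).1 o.2 u.2 *
        (r x u + γ * ∑ yz : X × (Z1 × Z2), p x u yz *
          alphaRec p r γ pol1 pol2 k (τ + 1) yz.1
            (Fin.snoc o.1 (u.1, yz.2.1), Fin.snoc o.2 (u.2, yz.2.2)))

/-- Expected discounted return `E[Σ_{t=τ}^{ℓ-1} γ^{t-τ} r(x_t, u_t)]` under the
process induced by `s0` and the joint policy. -/
noncomputable def expReturnFrom (p : X → U1 × U2 → X × (Z1 × Z2) → ℝ)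
    (r : X → U1 × U2 → ℝ) (γ : ℝ) (s0 : X → ℝ)
    (pol1 : (t : ℕ) → DR1 U1 Z1 t) (pol2 : (t : ℕ) → DR2 U2 Z2 t)
    (ℓ τ : ℕ) : ℝ :=
  ∑ w : Traj X U1 Z1 U2 Z2 ℓ, trajProb p s0 pol1 pol2 ℓ w *
    ∑ t : Fin ℓ, if τ ≤ t.1
      then γ ^ (t.1 - τ) * r (w.1 t.castSucc) ((w.2 t).1.1, (w.2 t).2.1) else 0

end ZSPOSG

open Finset Matrix

section Distributions

variable {α β : Type} [Fintype α] [Fintype β]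

lemma IsDist.sum_mul_le {w f : α → ℝ} (hw : IsDist w) {c : ℝ} (hf : ∀ a, f a ≤ c) :
    ∑ a, w a * f a ≤ c :=
  calc ∑ a, w a * f a ≤ ∑ a, w a * c :=
        sum_le_sum fun a _ => mul_le_mul_of_nonneg_left (hf a) (hw.1 a)
    _ = c := by rw [← sum_mul, hw.2, one_mul]

lemma IsDist.le_sum_mul {w f : α → ℝ} (hw : IsDist w) {c : ℝ} (hf : ∀ a, c ≤ f a) :
    c ≤ ∑ a, w a * f a :=
  calc c = ∑ a, w a * c := by rw [← sum_mul, hw.2, one_mul]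
    _ ≤ ∑ a, w a * f a := sum_le_sum fun a _ => mul_le_mul_of_nonneg_left (hf a) (hw.1 a)

lemma IsDist.prod_mul {f : α → ℝ} {g : β → ℝ} (hf : IsDist f) (hg : IsDist g) :
    IsDist fun u : α × β => f u.1 * g u.2 := by
  refine ⟨fun u => mul_nonneg (hf.1 _) (hg.1 _), ?_⟩
  simp only [Fintype.sum_prod_type, ← mul_sum, hg.2, mul_one, hf.2]

lemma sum_prod_prod_eq_sum_sum {γ M : Type} [Fintype γ] [AddCommMonoid M]
    (f : α × β × γ → M) : ∑ x, f x = ∑ c, ∑ ab : α × β, f (ab.1, (ab.2, c)) := by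
  simp only [Fintype.sum_prod_type]
  exact (sum_congr rfl fun a _ => sum_comm).trans sum_comm

end Distributions

/-- Since `⨅ i, f i = 0` for a family of reals unbounded below, a nonnegative bound on one
value suffices. -/
lemma Real.iInf_le_of_le_of_nonneg {ι : Type*} {f : ι → ℝ} {B : ℝ} (i : ι) (hi : f i ≤ B)
    (hB : 0 ≤ B) : ⨅ i, f i ≤ B := by
  by_cases hf : BddBelow (Set.range f)
  · exact ciInf_le_of_le hf i hi
  · rw [Real.iInf_of_not_bddBelow hf]
    exact hB

section Occupancy

variable {X U1 U2 Z1 Z2 : Type} [Fintype X] [Fintype U1] [Fintype Z1]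
  {τ : ℕ} {s : X × JHist U1 Z1 U2 Z2 τ → ℝ}

lemma marg2_nonneg (hs : ∀ xo, 0 ≤ s xo) (o2 : Hist2 U2 Z2 τ) : 0 ≤ marg2 τ s o2 :=
  sum_nonneg fun _ _ => sum_nonneg fun _ _ => hs _

lemma condOcc_nonneg (hs : ∀ xo, 0 ≤ s xo) (o2 : Hist2 U2 Z2 τ) (y : X × Hist1 U1 Z1 τ) :
    0 ≤ condOcc τ s o2 y :=
  div_nonneg (hs _) (marg2_nonneg hs o2)

lemma marg2_mul_condOcc (hs : ∀ xo, 0 ≤ s xo) (o2 : Hist2 U2 Z2 τ) (y : X × Hist1 U1 Z1 τ) :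
    marg2 τ s o2 * condOcc τ s o2 y = s (y.1, (y.2, o2)) := by
  by_cases hm : marg2 τ s o2 = 0
  -- here `condOcc` is the junk value `s / 0 = 0`, but `s` vanishes on the whole fibre
  · have hx := (sum_eq_zero_iff_of_nonneg fun _ _ => sum_nonneg fun _ _ => hs _).1 hm y.1
      (mem_univ _)
    rw [hm, zero_mul, (sum_eq_zero_iff_of_nonneg fun _ _ => hs _).1 hx y.2 (mem_univ _)]
  · exact mul_div_cancel₀ _ hm

lemma sum_mul_eq_sum_marg2_mul_condOcc [Fintype U2] [Fintype Z2] (hs : ∀ xo, 0 ≤ s xo)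
    (f : X × JHist U1 Z1 U2 Z2 τ → ℝ) :
    ∑ xo, s xo * f xo = ∑ o2 ∈ univ.filter (fun o2 => 0 < marg2 τ s o2),
      marg2 τ s o2 * (condOcc τ s o2 ⬝ᵥ fun y => f (y.1, (y.2, o2))) := by
  rw [sum_filter_of_ne fun o2 _ h => (marg2_nonneg hs o2).lt_of_ne' (left_ne_zero_of_mul h)]
  simp only [dotProduct, mul_sum, ← mul_assoc, marg2_mul_condOcc hs, Fintype.sum_prod_type]
  exact (sum_congr rfl fun x _ => sum_comm).trans sum_comm

end Occupancy

section Transition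

variable {X U1 U2 Z1 Z2 : Type} [Fintype X] [Fintype U1] [Fintype U2]

def jhistSnocEquiv (τ : ℕ) :
    JHist U1 Z1 U2 Z2 τ × (U1 × U2) × (X × (Z1 × Z2)) ≃ X × JHist U1 Z1 U2 Z2 (τ + 1) where
  toFun q := (q.2.2.1, (Fin.snoc q.1.1 (q.2.1.1, q.2.2.2.1), Fin.snoc q.1.2 (q.2.1.2, q.2.2.2.2)))
  invFun yo := ((Fin.init yo.2.1, Fin.init yo.2.2),
    ((yo.2.1 (Fin.last τ)).1, (yo.2.2 (Fin.last τ)).1),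
    (yo.1, ((yo.2.1 (Fin.last τ)).2, (yo.2.2 (Fin.last τ)).2)))
  left_inv q := by simp [Fin.init_snoc]
  right_inv yo := by simp [Fin.snoc_init_self]

lemma sum_jhist_succ [Fintype Z1] [Fintype Z2] {M : Type} [AddCommMonoid M] (τ : ℕ)
    (f : X × JHist U1 Z1 U2 Z2 (τ + 1) → M) :
    ∑ yo, f yo = ∑ o : JHist U1 Z1 U2 Z2 τ, ∑ u : U1 × U2, ∑ yz : X × (Z1 × Z2),
      f (yz.1, (Fin.snoc o.1 (u.1, yz.2.1), Fin.snoc o.2 (u.2, yz.2.2))) := by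
  rw [← (jhistSnocEquiv τ).sum_comp, Fintype.sum_prod_type]
  simp only [Fintype.sum_prod_type]
  rfl

variable (p : X → U1 × U2 → X × (Z1 × Z2) → ℝ)

lemma Tstage_snoc (τ : ℕ) (s : X × JHist U1 Z1 U2 Z2 τ → ℝ) (a1 : DR1 U1 Z1 τ)
    (a2 : DR2 U2 Z2 τ) (o : JHist U1 Z1 U2 Z2 τ) (u : U1 × U2) (yz : X × (Z1 × Z2)) :
    Tstage p τ s a1 a2 (yz.1, (Fin.snoc o.1 (u.1, yz.2.1), Fin.snoc o.2 (u.2, yz.2.2))) =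
      a1.1 o.1 u.1 * a2.1 o.2 u.2 * ∑ x, s (x, o) * p x u yz := by
  simp [Tstage, Fin.snoc_castSucc]

variable [Fintype Z1] [Fintype Z2]

lemma sum_Tstage_mul (τ : ℕ) (s : X × JHist U1 Z1 U2 Z2 τ → ℝ) (a1 : DR1 U1 Z1 τ)
    (a2 : DR2 U2 Z2 τ) (f : X × JHist U1 Z1 U2 Z2 (τ + 1) → ℝ) :
    ∑ yo, Tstage p τ s a1 a2 yo * f yo =
      ∑ xo, s xo * ∑ u, a1.1 xo.2.1 u.1 * a2.1 xo.2.2 u.2 * ∑ yz, p xo.1 u yz *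
        f (yz.1, (Fin.snoc xo.2.1 (u.1, yz.2.1), Fin.snoc xo.2.2 (u.2, yz.2.2))) := by
  rw [sum_jhist_succ]
  conv_rhs => rw [Fintype.sum_prod_type, sum_comm]
  refine sum_congr rfl fun o _ => ?_
  simp only [Tstage_snoc, mul_sum, sum_mul]
  conv_rhs => rw [sum_comm]
  refine sum_congr rfl fun u _ => ?_
  rw [sum_comm]
  exact sum_congr rfl fun x _ => sum_congr rfl fun yz _ => by ring

lemma Tstage_isDist (hp : ∀ x u, IsDist (p x u)) (τ : ℕ) {s : X × JHist U1 Z1 U2 Z2 τ → ℝ}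
    (hs : IsDist s) (a1 : DR1 U1 Z1 τ) (a2 : DR2 U2 Z2 τ) : IsDist (Tstage p τ s a1 a2) := by
  refine ⟨fun yo => mul_nonneg (mul_nonneg ((a1.2 _).1 _) ((a2.2 _).1 _))
    (sum_nonneg fun x _ => mul_nonneg (hs.1 _) ((hp _ _).1 _)), ?_⟩
  have h := sum_Tstage_mul p τ s a1 a2 1
  simp only [Pi.one_apply, mul_one, (hp _ _).2, ((a1.2 _).prod_mul (a2.2 _)).2] at h
  rw [h, hs.2]

lemma Rstage_le {r : X → U1 × U2 → ℝ} {M : ℝ} (hr : ∀ x u, r x u ≤ M) (τ : ℕ)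
    {s : X × JHist U1 Z1 U2 Z2 τ → ℝ} (hs : IsDist s) (a1 : DR1 U1 Z1 τ) (a2 : DR2 U2 Z2 τ) :
    Rstage r τ s a1 a2 ≤ M :=
  hs.sum_mul_le fun _ => ((a1.2 _).prod_mul (a2.2 _)).sum_mul_le fun _ => hr _ _

end Transition

section DeterministicRule

variable {U2 Z2 : Type} [Fintype U2]

open Classical in
noncomputable def DR2.pure {τ : ℕ} (d : Hist2 U2 Z2 τ → U2) : DR2 U2 Z2 τ :=
  ⟨fun o => Pi.single (d o) 1, fun o => ⟨fun u => by by_cases h : u = d o <;> simp [h], by simp⟩⟩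

open Classical in
lemma DR2.pure_apply {τ : ℕ} (d : Hist2 U2 Z2 τ → U2) (o : Hist2 U2 Z2 τ) (u : U2) :
    (DR2.pure d).1 o u = if u = d o then 1 else 0 := by
  simp [DR2.pure, Pi.single_apply]

instance [Nonempty U2] {τ : ℕ} : Nonempty (DR2 U2 Z2 τ) :=
  ⟨DR2.pure fun _ => Classical.arbitrary U2⟩

end DeterministicRule

section AlphaVectors

variable {X U1 U2 Z1 Z2 : Type} [Fintype X] [Fintype U1]
variable (p : X → U1 × U2 → X × (Z1 × Z2) → ℝ) (r : X → U1 × U2 → ℝ) (γ : ℝ)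
  (cont1 : (t : ℕ) → DR1 U1 Z1 t)

/-- The α-vector of playing `u2` at stage `τ` and continuing, after observing `z2`, with the
α-vector `g z2`. -/
noncomputable def alphaBackup [Fintype Z1] [Fintype Z2] (τ : ℕ) (u2 : U2)
    (g : Z2 → X × Hist1 U1 Z1 (τ + 1) → ℝ) : X × Hist1 U1 Z1 τ → ℝ := fun y =>
  ∑ u1, (cont1 τ).1 y.2 u1 * (r y.1 (u1, u2) +
    γ * ∑ yz : X × (Z1 × Z2), p y.1 (u1, u2) yz * g yz.2.2 (yz.1, Fin.snoc y.2 (u1, yz.2.1)))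

open Classical in
/-- The α-vectors of player 2's deterministic continuation strategies over `k` stages. -/
noncomputable def alphaSet [Fintype Z1] [Fintype Z2] [Fintype U2] :
    (k τ : ℕ) → Finset (X × Hist1 U1 Z1 τ → ℝ)
  | 0, _ => {0}
  | k + 1, τ => univ.biUnion fun u2 : U2 =>
      (Fintype.piFinset fun _ : Z2 => alphaSet k (τ + 1)).image (alphaBackup p r γ cont1 τ u2)

/-- The player-1 side of the (unnormalised) occupancy state reached from the weight `c` when
player 2 plays `u2` and then observes `z2`. -/
noncomputable def nextWeight (τ : ℕ) (c : X × Hist1 U1 Z1 τ → ℝ) (u2 : U2) (z2 : Z2) :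
    X × Hist1 U1 Z1 (τ + 1) → ℝ := fun w =>
  ∑ x, c (x, Fin.init w.2) * (cont1 τ).1 (Fin.init w.2) (w.2 (Fin.last τ)).1 *
    p x ((w.2 (Fin.last τ)).1, u2) (w.1, ((w.2 (Fin.last τ)).2, z2))

lemma nextWeight_nonneg (hp : ∀ x u yz, 0 ≤ p x u yz) (τ : ℕ) {c : X × Hist1 U1 Z1 τ → ℝ}
    (hc : ∀ y, 0 ≤ c y) (u2 : U2) (z2 : Z2) (w : X × Hist1 U1 Z1 (τ + 1)) :
    0 ≤ nextWeight p cont1 τ c u2 z2 w :=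
  sum_nonneg fun _ _ => mul_nonneg (mul_nonneg (hc _) (((cont1 τ).2 _).1 _)) (hp _ _ _)

def hist1SnocEquiv (τ : ℕ) :
    (X × Hist1 U1 Z1 τ) × U1 × (X × Z1) ≃ (X × Hist1 U1 Z1 (τ + 1)) × X where
  toFun q := ((q.2.2.1, Fin.snoc q.1.2 (q.2.1, q.2.2.2)), q.1.1)
  invFun w := ((w.2, Fin.init w.1.2), (w.1.2 (Fin.last τ)).1, (w.1.1, (w.1.2 (Fin.last τ)).2))
  left_inv q := by simp [Fin.init_snoc]
  right_inv w := by simp [Fin.snoc_init_self]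

lemma nextWeight_dotProduct [Fintype Z1] (τ : ℕ) (c : X × Hist1 U1 Z1 τ → ℝ) (u2 : U2)
    (z2 : Z2) (f : X × Hist1 U1 Z1 (τ + 1) → ℝ) :
    nextWeight p cont1 τ c u2 z2 ⬝ᵥ f = ∑ y, c y * ∑ u1, (cont1 τ).1 y.2 u1 *
      ∑ xz : X × Z1, p y.1 (u1, u2) (xz.1, (xz.2, z2)) * f (xz.1, Fin.snoc y.2 (u1, xz.2)) := by
  simp only [dotProduct, nextWeight, sum_mul]
  rw [← Fintype.sum_prod_type', ← (hist1SnocEquiv τ).sum_comp]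
  simp only [Fintype.sum_prod_type, mul_sum]
  refine sum_congr rfl fun x _ => sum_congr rfl fun o1 _ => sum_congr rfl fun u1 _ =>
    sum_congr rfl fun y _ => sum_congr rfl fun z1 _ => ?_
  simp only [hist1SnocEquiv, Equiv.coe_fn_mk, Fin.init_snoc, Fin.snoc_last]
  ring

variable [Fintype Z1] [Fintype Z2]

lemma dotProduct_alphaBackup (τ : ℕ) (c : X × Hist1 U1 Z1 τ → ℝ) (u2 : U2)
    (g : Z2 → X × Hist1 U1 Z1 (τ + 1) → ℝ) :
    c ⬝ᵥ alphaBackup p r γ cont1 τ u2 g =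
      (∑ y, c y * ∑ u1, (cont1 τ).1 y.2 u1 * r y.1 (u1, u2)) +
        γ * ∑ z2, nextWeight p cont1 τ c u2 z2 ⬝ᵥ g z2 := by
  simp only [nextWeight_dotProduct]
  rw [sum_comm, mul_sum, ← sum_add_distrib]
  refine sum_congr rfl fun y _ => ?_
  simp only [alphaBackup, sum_prod_prod_eq_sum_sum (γ := Z2), mul_add, sum_add_distrib, mul_sum]
  congr 1
  rw [sum_comm]
  exact sum_congr rfl fun u1 _ => sum_congr rfl fun z2 _ => sum_congr rfl fun xz _ => by ring

lemma dotProduct_alphaBackup_le (hγ : 0 ≤ γ) (τ : ℕ) (c : X × Hist1 U1 Z1 τ → ℝ) (u2 : U2)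
    {g g' : Z2 → X × Hist1 U1 Z1 (τ + 1) → ℝ}
    (h : ∀ z2, nextWeight p cont1 τ c u2 z2 ⬝ᵥ g z2 ≤ nextWeight p cont1 τ c u2 z2 ⬝ᵥ g' z2) :
    c ⬝ᵥ alphaBackup p r γ cont1 τ u2 g ≤ c ⬝ᵥ alphaBackup p r γ cont1 τ u2 g' := by
  rw [dotProduct_alphaBackup, dotProduct_alphaBackup]
  gcongr with z2
  exact h z2

variable [Fintype U2]

lemma mem_alphaSet_succ {k τ : ℕ} {β : X × Hist1 U1 Z1 τ → ℝ} :
    β ∈ alphaSet p r γ cont1 (k + 1) τ ↔ ∃ u2 g,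
      (∀ z2, g z2 ∈ alphaSet p r γ cont1 k (τ + 1)) ∧ β = alphaBackup p r γ cont1 τ u2 g := by
  classical
  simp only [alphaSet, mem_biUnion, mem_univ, true_and, mem_image, Fintype.mem_piFinset]
  exact exists_congr fun u2 =>
    ⟨fun ⟨g, hg, h⟩ => ⟨g, hg, h.symm⟩, fun ⟨g, hg, h⟩ => ⟨g, hg, h.symm⟩⟩

lemma alphaSet_nonempty [Nonempty U2] : ∀ k τ, (alphaSet p r γ cont1 k τ).Nonempty
  | 0, _ => singleton_nonempty _
  | k + 1, τ =>
    let ⟨β, hβ⟩ := alphaSet_nonempty k (τ + 1)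
    ⟨_, (mem_alphaSet_succ p r γ cont1).2 ⟨Classical.arbitrary U2, fun _ => β, fun _ => hβ, rfl⟩⟩

lemma alphaRec_succ_eq_sum_alphaBackup (pol2 : (t : ℕ) → DR2 U2 Z2 t) (k τ : ℕ) (x : X)
    (o1 : Hist1 U1 Z1 τ) (o2 : Hist2 U2 Z2 τ) :
    alphaRec p r γ cont1 pol2 (k + 1) τ x (o1, o2) = ∑ u2, (pol2 τ).1 o2 u2 *
      alphaBackup p r γ cont1 τ u2
        (fun z2 w => alphaRec p r γ cont1 pol2 k (τ + 1) w.1 (w.2, Fin.snoc o2 (u2, z2)))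
        (x, o1) := by
  simp only [alphaRec, alphaBackup, Fintype.sum_prod_type, mul_sum]
  rw [sum_comm]
  exact sum_congr rfl fun u1 _ => sum_congr rfl fun u2 _ => by ring

lemma alphaRec_congr {pol2 pol2' : (t : ℕ) → DR2 U2 Z2 t} :
    ∀ {k τ : ℕ}, (∀ t, τ ≤ t → pol2 t = pol2' t) → ∀ x o,
      alphaRec p r γ cont1 pol2 k τ x o = alphaRec p r γ cont1 pol2' k τ x o
  | 0, _, _, _, _ => rfl
  | k + 1, τ, h, x, o => by
    simp only [alphaRec, h τ le_rfl,
      alphaRec_congr (k := k) fun t ht => h t (Nat.le_of_succ_le ht)]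

lemma inf'_alphaSet_le [Nonempty U2] (hp : ∀ x u yz, 0 ≤ p x u yz) (hγ : 0 ≤ γ)
    (pol2 : (t : ℕ) → DR2 U2 Z2 t) :
    ∀ (k τ : ℕ) (o2 : Hist2 U2 Z2 τ) (c : X × Hist1 U1 Z1 τ → ℝ), (∀ y, 0 ≤ c y) →
      (alphaSet p r γ cont1 k τ).inf' (alphaSet_nonempty p r γ cont1 k τ) (c ⬝ᵥ ·) ≤
        c ⬝ᵥ fun y => alphaRec p r γ cont1 pol2 k τ y.1 (y.2, o2)
  | 0, _, _, _, _ => by simp [alphaSet, alphaRec, dotProduct]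
  | k + 1, τ, o2, c, hc => by
    have hsplit : (c ⬝ᵥ fun y => alphaRec p r γ cont1 pol2 (k + 1) τ y.1 (y.2, o2)) =
        ∑ u2, (pol2 τ).1 o2 u2 * (c ⬝ᵥ alphaBackup p r γ cont1 τ u2
          fun z2 w => alphaRec p r γ cont1 pol2 k (τ + 1) w.1 (w.2, Fin.snoc o2 (u2, z2))) := by
      simp only [dotProduct, alphaRec_succ_eq_sum_alphaBackup, mul_sum]
      rw [sum_comm]
      exact sum_congr rfl fun y _ => sum_congr rfl fun u2 _ => by ring
    rw [hsplit]
    refine ((pol2 τ).2 o2).le_sum_mul fun u2 => ?_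
    -- player 2 does at least as well by continuing, after each `z2`, with a minimising α-vector
    choose g hg hg_min using fun z2 => exists_mem_eq_inf'
      (alphaSet_nonempty p r γ cont1 k (τ + 1)) (nextWeight p cont1 τ c u2 z2 ⬝ᵥ ·)
    refine (inf'_le _ ((mem_alphaSet_succ p r γ cont1).2 ⟨u2, g, hg, rfl⟩)).trans
      (dotProduct_alphaBackup_le p r γ cont1 hγ τ c u2 fun z2 => ?_)
    rw [← hg_min]
    exact inf'_alphaSet_le hp hγ pol2 k (τ + 1) _ _ (nextWeight_nonneg p cont1 hp τ hc u2 z2)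

lemma exists_alphaRec_eq [Nonempty U2] :
    ∀ (k τ : ℕ) (b : Hist2 U2 Z2 τ → X × Hist1 U1 Z1 τ → ℝ),
      (∀ o2, b o2 ∈ alphaSet p r γ cont1 k τ) →
      ∃ pol2 : (t : ℕ) → DR2 U2 Z2 t, ∀ o2 x o1,
        alphaRec p r γ cont1 pol2 k τ x (o1, o2) = b o2 (x, o1)
  | 0, _, b, hb => ⟨Classical.arbitrary _, fun o2 x o1 => by
      simp [mem_singleton.1 (hb o2), alphaRec]⟩
  | k + 1, τ, b, hb => by
    choose u2 g hg hb_eq using fun o2 => (mem_alphaSet_succ p r γ cont1).1 (hb o2)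
    obtain ⟨pol2, hpol2⟩ := exists_alphaRec_eq k (τ + 1)
      (fun h => g (Fin.init h) (h (Fin.last τ)).2) fun h => hg _ _
    refine ⟨Function.update pol2 τ (DR2.pure u2), fun o2 x o1 => ?_⟩
    have hcont : ∀ y o,
        alphaRec p r γ cont1 (Function.update pol2 τ (DR2.pure u2)) k (τ + 1) y o =
          alphaRec p r γ cont1 pol2 k (τ + 1) y o :=
      alphaRec_congr p r γ cont1 fun t ht => Function.update_of_ne (by omega) _ _
    rw [alphaRec_succ_eq_sum_alphaBackup, Function.update_self]
    simp only [DR2.pure_apply, ite_mul, one_mul, zero_mul, hcont, hpol2, Fin.init_snoc,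
      Fin.snoc_last, hb_eq o2]
    rw [Fintype.sum_eq_single (u2 o2) fun u hu => if_neg hu, if_pos rfl]

end AlphaVectors

section PolicyValue

variable {X U1 U2 Z1 Z2 : Type} [Fintype X] [Fintype U1] [Fintype U2] [Fintype Z1] [Fintype Z2]
variable (p : X → U1 × U2 → X × (Z1 × Z2) → ℝ) (r : X → U1 × U2 → ℝ) (γ : ℝ)
  (cont1 : (t : ℕ) → DR1 U1 Z1 t)

noncomputable def policyValue (cont2 : (t : ℕ) → DR2 U2 Z2 t) (k τ : ℕ)
    (s : X × JHist U1 Z1 U2 Z2 τ → ℝ) : ℝ :=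
  ∑ xo, s xo * alphaRec p r γ cont1 cont2 k τ xo.1 xo.2

lemma policyValue_succ (cont2 : (t : ℕ) → DR2 U2 Z2 t) (k τ : ℕ)
    (s : X × JHist U1 Z1 U2 Z2 τ → ℝ) :
    policyValue p r γ cont1 cont2 (k + 1) τ s = Rstage r τ s (cont1 τ) (cont2 τ) +
      γ * policyValue p r γ cont1 cont2 k (τ + 1) (Tstage p τ s (cont1 τ) (cont2 τ)) := by
  rw [policyValue, policyValue, sum_Tstage_mul, Rstage, mul_sum, ← sum_add_distrib]
  refine sum_congr rfl fun xo _ => ?_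
  simp only [alphaRec, mul_add, sum_add_distrib, mul_sum]
  congr 1
  exact sum_congr rfl fun u _ => sum_congr rfl fun yz _ => by ring

lemma policyValue_update_succ (cont2 : (t : ℕ) → DR2 U2 Z2 t) (k τ : ℕ) (a2 : DR2 U2 Z2 τ)
    (s : X × JHist U1 Z1 U2 Z2 τ → ℝ) :
    policyValue p r γ cont1 (Function.update cont2 τ a2) (k + 1) τ s =
      Rstage r τ s (cont1 τ) a2 +
        γ * policyValue p r γ cont1 cont2 k (τ + 1) (Tstage p τ s (cont1 τ) a2) := by
  rw [policyValue_succ, Function.update_self]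
  congr 2
  exact sum_congr rfl fun yo _ => congrArg _ <|
    alphaRec_congr p r γ cont1 (fun t ht => Function.update_of_ne (by omega) _ _) _ _

lemma isLeast_policyValue [Nonempty U2] (hp : ∀ x u yz, 0 ≤ p x u yz) (hγ : 0 ≤ γ) (k τ : ℕ)
    {s : X × JHist U1 Z1 U2 Z2 τ → ℝ} (hs : ∀ xo, 0 ≤ s xo) :
    IsLeast (Set.range fun cont2 : (t : ℕ) → DR2 U2 Z2 t => policyValue p r γ cont1 cont2 k τ s)
      (∑ o2 ∈ univ.filter (fun o2 => 0 < marg2 τ s o2), marg2 τ s o2 *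
        (alphaSet p r γ cont1 k τ).inf' (alphaSet_nonempty p r γ cont1 k τ)
          (condOcc τ s o2 ⬝ᵥ ·)) := by
  constructor
  · choose b hb hb_min using fun o2 => exists_mem_eq_inf'
      (alphaSet_nonempty p r γ cont1 k τ) (condOcc τ s o2 ⬝ᵥ ·)
    obtain ⟨cont2, hcont2⟩ := exists_alphaRec_eq p r γ cont1 k τ b hb
    refine ⟨cont2, ?_⟩
    simp only [policyValue, sum_mul_eq_sum_marg2_mul_condOcc hs, hb_min, hcont2]
  · rintro _ ⟨cont2, rfl⟩
    dsimp only
    rw [policyValue, sum_mul_eq_sum_marg2_mul_condOcc hs]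
    exact sum_le_sum fun o2 _ => mul_le_mul_of_nonneg_left
      (inf'_alphaSet_le p r γ cont1 hp hγ cont2 k τ o2 _ (condOcc_nonneg hs o2))
      (marg2_nonneg hs o2)

end PolicyValue

section OptimalValue

variable {X U1 U2 Z1 Z2 : Type} [Fintype X] [Fintype U1] [Fintype U2] [Fintype Z1] [Fintype Z2]
variable (p : X → U1 × U2 → X × (Z1 × Z2) → ℝ) (r : X → U1 × U2 → ℝ) (γ : ℝ)

lemma exists_iInf_bellman_le [Nonempty U2] (hp : ∀ x u, IsDist (p x u)) (hγ : 0 ≤ γ)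
    (k τ : ℕ) : ∃ B, 0 ≤ B ∧ ∀ s, IsDist s → ∀ a1 : DR1 U1 Z1 τ, ⨅ a2 : DR2 U2 Z2 τ,
      Rstage r τ s a1 a2 + γ * vstar p r γ k (τ + 1) (Tstage p τ s a1 a2) ≤ B := by
  obtain ⟨C, hC0, hC⟩ : ∃ C, 0 ≤ C ∧ ∀ s, IsDist s → vstar p r γ k (τ + 1) s ≤ C := by
    cases k with
    | zero => exact ⟨0, le_rfl, fun _ _ => le_rfl⟩
    | succ k =>
      obtain ⟨B, hB0, hB⟩ := exists_iInf_bellman_le hp hγ k (τ + 1)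
      exact ⟨B, hB0, fun s hs => Real.iSup_le (hB s hs) hB0⟩
  obtain ⟨M, hM⟩ := (Set.finite_range fun xu : X × (U1 × U2) => r xu.1 xu.2).bddAbove
  have hr : ∀ x u, r x u ≤ max M 0 := fun x u => (hM ⟨(x, u), rfl⟩).trans (le_max_left _ _)
  have hB0 : 0 ≤ max M 0 + γ * C := by positivity
  refine ⟨max M 0 + γ * C, hB0, fun s hs a1 => ?_⟩
  let a2 : DR2 U2 Z2 τ := Classical.arbitrary _
  exact Real.iInf_le_of_le_of_nonneg a2 (add_le_add (Rstage_le hr τ hs a1 a2)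
    (mul_le_mul_of_nonneg_left (hC _ (Tstage_isDist p hp τ hs a1 a2)) hγ)) hB0

variable (cont1 : (t : ℕ) → DR1 U1 Z1 t)

lemma iInf_policyValue_le_vstar [Nonempty U2] (hp : ∀ x u, IsDist (p x u)) (hγ : 0 ≤ γ) :
    ∀ (k τ : ℕ) (s : X × JHist U1 Z1 U2 Z2 τ → ℝ), IsDist s →
      ⨅ cont2 : (t : ℕ) → DR2 U2 Z2 t, policyValue p r γ cont1 cont2 k τ s ≤ vstar p r γ k τ s
  | 0, _, _, _ => by simp [policyValue, alphaRec, vstar]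
  | k + 1, τ, s, hs => by
    set T := Tstage p τ s (cont1 τ)
    have hbdd := (isLeast_policyValue p r γ cont1 (fun x u => (hp x u).1) hγ (k + 1) τ
      hs.1).bddBelow
    have hstep : ∀ a2 : DR2 U2 Z2 τ, ⨅ cont2, policyValue p r γ cont1 cont2 (k + 1) τ s ≤
        Rstage r τ s (cont1 τ) a2 + γ * vstar p r γ k (τ + 1) (T a2) := by
      intro a2
      have hnext : (⨅ cont2, policyValue p r γ cont1 cont2 (k + 1) τ s) -
          Rstage r τ s (cont1 τ) a2 ≤
            γ * ⨅ cont2, policyValue p r γ cont1 cont2 k (τ + 1) (T a2) := by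
        rw [Real.mul_iInf_of_nonneg hγ]
        refine le_ciInf fun cont2 => ?_
        have := ciInf_le hbdd (Function.update cont2 τ a2)
        rw [policyValue_update_succ] at this
        linarith
      have IH := iInf_policyValue_le_vstar hp hγ k (τ + 1) (T a2)
        (Tstage_isDist p hp τ hs (cont1 τ) a2)
      linarith [mul_le_mul_of_nonneg_left IH hγ]
    obtain ⟨B, -, hB⟩ := exists_iInf_bellman_le p r γ hp hγ k τ
    exact (le_ciInf hstep).trans <| le_ciSup (f := fun a1 => ⨅ a2 : DR2 U2 Z2 τ,
      Rstage r τ s a1 a2 + γ * vstar p r γ k (τ + 1) (Tstage p τ s a1 a2))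
      ⟨B, Set.forall_mem_range.2 (hB s hs)⟩ (cont1 τ)

end OptimalValue

section ZSPOSG

variable {X U1 U2 Z1 Z2 : Type}
variable [Fintype X] [Fintype U1] [Fintype U2] [Fintype Z1] [Fintype Z2]
variable [DecidableEq X] [DecidableEq U1] [DecidableEq U2] [DecidableEq Z1] [DecidableEq Z2]

open Classical in
theorem stmt9_general
    [Nonempty U2]
    (p : X → U1 × U2 → X × (Z1 × Z2) → ℝ) (r : X → U1 × U2 → ℝ)
    (γ : ℝ) (ℓ : ℕ)
    (hp : ∀ x u, IsDist (p x u)) (hγ0 : 0 ≤ γ)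
    (τ : ℕ) (cont1 : (t : ℕ) → DR1 U1 Z1 t) :
    (∃ (V : Finset ((X × Hist1 U1 Z1 τ → ℝ) →ₗ[ℝ] ℝ)) (hV : V.Nonempty),
        ∀ s : X × JHist U1 Z1 U2 Z2 τ → ℝ, IsDist s →
          (⨅ cont2 : (t : ℕ) → DR2 U2 Z2 t,
              ∑ xo : X × JHist U1 Z1 U2 Z2 τ,
                s xo * alphaRec p r γ cont1 cont2 (ℓ - τ) τ xo.1 xo.2) =
            ∑ o2 ∈ Finset.univ.filter (fun o2 : Hist2 U2 Z2 τ => 0 < marg2 τ s o2),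
              marg2 τ s o2 * V.inf' hV fun α => α (condOcc τ s o2)) ∧
      ∀ s : X × JHist U1 Z1 U2 Z2 τ → ℝ, IsDist s →
        (⨅ cont2 : (t : ℕ) → DR2 U2 Z2 t,
            ∑ xo : X × JHist U1 Z1 U2 Z2 τ,
              s xo * alphaRec p r γ cont1 cont2 (ℓ - τ) τ xo.1 xo.2) ≤
          vstar p r γ (ℓ - τ) τ s := by
  refine ⟨⟨(alphaSet p r γ cont1 (ℓ - τ) τ).image (dotProductBilin ℝ ℝ).flip,
    (alphaSet_nonempty p r γ cont1 (ℓ - τ) τ).image _, fun s hs => ?_⟩,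
    iInf_policyValue_le_vstar p r γ cont1 hp hγ0 (ℓ - τ) τ⟩
  simp only [inf'_image, Function.comp_def, LinearMap.flip_apply, dotProductBilin_apply_apply]
  exact (isLeast_policyValue p r γ cont1 (fun x u => (hp x u).1) hγ0 (ℓ - τ) τ hs.1).csInf_eq

open Classical in
/-- for a fixed player-1 continuation policy `a¹_{τ:}`, the
best-response value
`v^{a¹}_τ(s_τ) = min_{a²_{τ:}} Σ_{x,o} s_τ(x,o) α^{(a¹_{τ:},a²_{τ:})}_τ(x,o)` satisfies:
(i) there is a finite collection `V` of linear functions on `ℝ^{X × O¹_τ}` with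
`v^{a¹}_τ(s_τ) = Σ_{o²: s^m_τ(o²) > 0} s^m_τ(o²) ⬝ min_{α ∈ V} α(s^{c,o²}_τ)` for every
occupancy state `s_τ`; and (ii) `v^{a¹}_τ(s_τ) ≤ v*_τ(s_τ)` for every occupancy state. -/
theorem stmt9
    [Nonempty X] [Nonempty U1] [Nonempty U2] [Nonempty Z1] [Nonempty Z2]
    (p : X → U1 × U2 → X × (Z1 × Z2) → ℝ) (r : X → U1 × U2 → ℝ)
    (s0 : X → ℝ) (γ : ℝ) (ℓ : ℕ)
    (hp : ∀ x u, IsDist (p x u)) (hs0 : IsDist s0) (hγ0 : 0 ≤ γ) (hγ1 : γ < 1)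
    (τ : ℕ) (hτ : τ ≤ ℓ) (cont1 : (t : ℕ) → DR1 U1 Z1 t) :
    (∃ (V : Finset ((X × Hist1 U1 Z1 τ → ℝ) →ₗ[ℝ] ℝ)) (hV : V.Nonempty),
        ∀ s : X × JHist U1 Z1 U2 Z2 τ → ℝ, IsDist s →
          (⨅ cont2 : (t : ℕ) → DR2 U2 Z2 t,
              ∑ xo : X × JHist U1 Z1 U2 Z2 τ,
                s xo * alphaRec p r γ cont1 cont2 (ℓ - τ) τ xo.1 xo.2) =
            ∑ o2 ∈ Finset.univ.filter (fun o2 : Hist2 U2 Z2 τ => 0 < marg2 τ s o2),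
              marg2 τ s o2 * V.inf' hV fun α => α (condOcc τ s o2)) ∧
      ∀ s : X × JHist U1 Z1 U2 Z2 τ → ℝ, IsDist s →
        (⨅ cont2 : (t : ℕ) → DR2 U2 Z2 t,
            ∑ xo : X × JHist U1 Z1 U2 Z2 τ,
              s xo * alphaRec p r γ cont1 cont2 (ℓ - τ) τ xo.1 xo.2) ≤
          vstar p r γ (ℓ - τ) τ s :=
  stmt9_general p r γ ℓ hp hγ0 τ cont1

end ZSPOSG
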